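/- Let (X,‖·‖) be a Banach space, N ∈ ℕ, f ∈ C^N([a,b],X), m ∈ ℕ (m ≥ 1), 0 < α < 1, and n ∈ ℕ with n^{1−α} > 2 and ⌈na⌉ ≤ ⌊nb⌋. Assume f^{(j)}(x₀) = 0 for j = 1,…,N for some x₀ ∈ [a,b]. Then ‖A_n(f,x₀) − f(x₀)‖ ≤ (1 + 4^m)^{1/(2m)} [ ω₁(f^{(N)}, 1/n^α) · 2/(n^{αN} N!) + ‖f^{(N)}‖_∞ (b−a)^N/(N! m(n^{1−α} − 2)^{2m}) ]. -/

import Mathlib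

open scoped BigOperators
open Real Filter

/-- The algebraic sigmoid function `φ(x) = x / (1 + x^(2m))^(1/(2m))`. -/
noncomputable def phi (m : ℕ) (x : ℝ) : ℝ :=
  x / (1 + x ^ (2 * m)) ^ ((1 : ℝ) / (2 * m))

/-- The activation function `Φ(x) = (φ(x+1) - φ(x-1))/4`. -/
noncomputable def Phi (m : ℕ) (x : ℝ) : ℝ :=
  (phi m (x + 1) - phi m (x - 1)) / 4

/-- First modulus of continuity of `f` on the set `s`, with step `δ`. -/
noncomputable def omega1 {X : Type*} [NormedAddCommGroup X] (f : ℝ → X) (s : Set ℝ)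
    (δ : ℝ) : ℝ :=
  sSup {r : ℝ | ∃ x ∈ s, ∃ y ∈ s, |x - y| ≤ δ ∧ r = ‖f x - f y‖}

/-- Sup norm of `f` over a set `s`. -/
noncomputable def supNorm {X : Type*} [NormedAddCommGroup X] (f : ℝ → X) (s : Set ℝ) : ℝ :=
  ⨆ t : s, ‖f t‖

/-- The neural network operator `A_n` induced by the density `Φ`. -/
noncomputable def An {X : Type*} [NormedAddCommGroup X] [Module ℝ X]
    (m : ℕ) (a b : ℝ) (n : ℕ) (f : ℝ → X) (x : ℝ) : X :=
  (∑ k ∈ Finset.Icc ⌈(n : ℝ) * a⌉ ⌊(n : ℝ) * b⌋, Phi m ((n : ℝ) * x - (k : ℝ)))⁻¹ •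
    ∑ k ∈ Finset.Icc ⌈(n : ℝ) * a⌉ ⌊(n : ℝ) * b⌋,
      Phi m ((n : ℝ) * x - (k : ℝ)) • f ((k : ℝ) / n)

/-!
`A_n f x₀ - f x₀` is the `Φ`-weighted average of the differences `f (k/n) - f x₀`. Because
`f^{(j)}(x₀) = 0` for `1 ≤ j ≤ N`, integrating a bound `c` on `‖f^{(N)}‖` `N` times from `x₀` gives
`‖f x - f x₀‖ ≤ c |x - x₀|^N / N!`; take `c = ω₁(f^{(N)}, n^{-α})` at the nodes with
`|k/n - x₀| ≤ n^{-α}` and `c = ‖f^{(N)}‖_∞` at the others. The total weight is at least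
`1 / (2 (1 + 4^m)^{1/(2m)})`, the value of `Φ` at `±1`, which bounds `Φ` from below on `[-1, 1]` by
subadditivity of `φ` on `[0, ∞)`. Summed over an arithmetic progression of step `1`, the
`Φ(y + j) = (φ(y + j + 1) - φ(y + j - 1)) / 4` telescope, and `1 - φ(y) ≤ 1 / (2m y^{2m})` by
Bernoulli's inequality; hence the weight of the far nodes is at most `1 / (2m (n^{1-α} - 1)^{2m})`.
-/

open Set

section Activation

variable {m : ℕ}

noncomputable def phiDenom (m : ℕ) (x : ℝ) : ℝ :=
  (1 + x ^ (2 * m)) ^ ((1 : ℝ) / (2 * m))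

theorem phi_eq_div_phiDenom (x : ℝ) : phi m x = x / phiDenom m x := rfl

theorem one_add_pow_two_mul_pos (x : ℝ) : 0 < 1 + x ^ (2 * m) := by
  have := (even_two_mul m).pow_nonneg x
  linarith

theorem phiDenom_pos (x : ℝ) : 0 < phiDenom m x :=
  Real.rpow_pos_of_pos (one_add_pow_two_mul_pos x) _

theorem phiDenom_pow (hm : 1 ≤ m) (x : ℝ) : phiDenom m x ^ (2 * m) = 1 + x ^ (2 * m) := by
  have h : (1 : ℝ) / (2 * m) = ((2 * m : ℕ) : ℝ)⁻¹ := by push_cast; ring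
  rw [phiDenom, h, Real.rpow_inv_natCast_pow (one_add_pow_two_mul_pos x).le (by omega)]

theorem phiDenom_le_phiDenom {s t : ℝ} (hs : 0 ≤ s) (hst : s ≤ t) : phiDenom m s ≤ phiDenom m t := by
  unfold phiDenom
  gcongr

theorem abs_lt_phiDenom (hm : 1 ≤ m) (x : ℝ) : |x| < phiDenom m x := by
  rw [← pow_lt_pow_iff_left₀ (abs_nonneg x) (phiDenom_pos x).le (by omega : 2 * m ≠ 0),
    phiDenom_pow hm, (even_two_mul m).pow_abs]
  linarith

theorem phi_neg (x : ℝ) : phi m (-x) = -phi m x := by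
  rw [phi, phi, (even_two_mul m).neg_pow, neg_div]

theorem phi_le_one (hm : 1 ≤ m) (x : ℝ) : phi m x ≤ 1 := by
  rw [phi_eq_div_phiDenom, div_le_one (phiDenom_pos x)]
  exact (le_abs_self x).trans (abs_lt_phiDenom hm x).le

theorem phi_monotone (hm : 1 ≤ m) : Monotone (phi m) := by
  refine monotone_of_odd_of_monotoneOn_nonneg phi_neg fun s (hs : 0 ≤ s) t (ht : 0 ≤ t) hst => ?_
  have hDs := phiDenom_pos (m := m) s
  have hDt := phiDenom_pos (m := m) t
  rw [phi_eq_div_phiDenom, phi_eq_div_phiDenom, div_le_div_iff₀ hDs hDt,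
    ← pow_le_pow_iff_left₀ (by positivity) (by positivity) (by omega : 2 * m ≠ 0),
    mul_pow, mul_pow, phiDenom_pow hm, phiDenom_pow hm]
  have := pow_le_pow_left₀ hs hst (2 * m)
  nlinarith

theorem phi_add_le {s t : ℝ} (hs : 0 ≤ s) (ht : 0 ≤ t) : phi m (s + t) ≤ phi m s + phi m t := by
  simp only [phi_eq_div_phiDenom, add_div]
  gcongr
  · exact phiDenom_pos s
  · exact phiDenom_le_phiDenom hs (by linarith)
  · exact phiDenom_pos t
  · exact phiDenom_le_phiDenom ht (by linarith)

theorem phi_two : phi m 2 = 2 / (1 + 4 ^ m) ^ ((1 : ℝ) / (2 * m)) := by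
  norm_num [phi, pow_mul]

theorem one_sub_phi_le (hm : 1 ≤ m) {y : ℝ} (hy : 0 < y) :
    1 - phi m y ≤ ((2 * m) * y ^ (2 * m))⁻¹ := by
  set ε := ((2 * m) * y ^ (2 * m))⁻¹ with hε_def
  have hε : 0 < ε := by positivity
  have hD := phiDenom_pos (m := m) y
  have hyD : y ≤ phiDenom m y := (le_abs_self y).trans (abs_lt_phiDenom hm y).le
  -- Bernoulli: `(1 + ε)^(2m) ≥ 1 + y^(-2m)`, so `phiDenom m y ≤ y (1 + ε)`.
  have hDle : phiDenom m y ≤ y * (1 + ε) := by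
    rw [← pow_le_pow_iff_left₀ hD.le (by positivity) (by omega : 2 * m ≠ 0), phiDenom_pow hm,
      mul_pow]
    have hB := one_add_mul_le_pow (a := ε) (by linarith) (2 * m)
    have : y ^ (2 * m) * ((2 * m : ℕ) * ε) = 1 := by
      rw [hε_def]; push_cast; field_simp
    nlinarith [pow_pos hy (2 * m)]
  rw [phi_eq_div_phiDenom, one_sub_div hD.ne', div_le_iff₀ hD]
  nlinarith [mul_le_mul_of_nonneg_left hyD hε.le]

theorem Phi_nonneg (hm : 1 ≤ m) (x : ℝ) : 0 ≤ Phi m x := by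
  have := phi_monotone hm (show x - 1 ≤ x + 1 by linarith)
  rw [Phi]
  linarith

theorem Phi_neg (x : ℝ) : Phi m (-x) = Phi m x := by
  rw [Phi, Phi, show -x + 1 = -(x - 1) by ring, show -x - 1 = -(x + 1) by ring, phi_neg, phi_neg]
  ring

theorem inv_two_mul_le_Phi {y : ℝ} (hy : |y| ≤ 1) :
    (2 * (1 + 4 ^ m) ^ ((1 : ℝ) / (2 * m)))⁻¹ ≤ Phi m y := by
  rw [abs_le] at hy
  have h := phi_add_le (m := m) (by linarith : 0 ≤ y + 1) (by linarith : 0 ≤ 1 - y)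
  rw [show y + 1 + (1 - y) = 2 by ring, phi_two, ← neg_sub y 1, phi_neg] at h
  have hC : 0 < ((1 : ℝ) + 4 ^ m) ^ ((1 : ℝ) / (2 * m)) := Real.rpow_pos_of_pos (by positivity) _
  calc (2 * (1 + 4 ^ m) ^ ((1 : ℝ) / (2 * m)))⁻¹ = 2 / (1 + 4 ^ m) ^ ((1 : ℝ) / (2 * m)) / 4 := by
        field_simp; norm_num
    _ ≤ Phi m y := by rw [Phi]; linarith

theorem sum_range_Phi_add_natCast (y : ℝ) (M : ℕ) :
    ∑ j ∈ Finset.range M, Phi m (y + j) =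
      (phi m (y + M) + phi m (y + M - 1) - phi m y - phi m (y - 1)) / 4 := by
  induction M with
  | zero => simp
  | succ M ih =>
    rw [Finset.sum_range_succ, ih, Phi]
    push_cast
    ring_nf

theorem sum_Phi_add_natCast_le (hm : 1 ≤ m) (y : ℝ) (T : Finset ℕ) :
    ∑ j ∈ T, Phi m (y + j) ≤ (1 - phi m (y - 1)) / 2 := by
  obtain ⟨M, hM⟩ := T.exists_nat_subset_range
  calc ∑ j ∈ T, Phi m (y + j)
      ≤ ∑ j ∈ Finset.range M, Phi m (y + j) :=
        Finset.sum_le_sum_of_subset_of_nonneg hM fun j _ _ => Phi_nonneg hm _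
    _ ≤ (1 - phi m (y - 1)) / 2 := by
        rw [sum_range_Phi_add_natCast]
        have := phi_monotone hm (show y - 1 ≤ y by linarith)
        linarith [phi_le_one hm (y + M), phi_le_one hm (y + M - 1)]

theorem sum_Phi_intCast_sub_le (hm : 1 ≤ m) {S : Finset ℤ} {z r : ℝ} (hr : 1 < r)
    (hS : ∀ k ∈ S, z + r < k) : ∑ k ∈ S, Phi m (k - z) ≤ ((4 * m) * (r - 1) ^ (2 * m))⁻¹ := by
  set K : ℤ := ⌊z + r⌋ + 1
  have hK : z + r < K := by push_cast [K]; exact Int.lt_floor_add_one _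
  have hKk : ∀ k ∈ S, K ≤ k := fun k hk => by
    have := Int.floor_lt.2 (hS k hk)
    omega
  have hreindex : ∑ k ∈ S, Phi m (k - z) =
      ∑ j ∈ S.image fun k => (k - K).toNat, Phi m ((K - z) + j) := by
    rw [Finset.sum_image fun k hk l hl h => by
      have := hKk k hk; have := hKk l hl; omega]
    refine Finset.sum_congr rfl fun k hk => ?_
    rw [← Int.cast_natCast, Int.toNat_of_nonneg (by linarith [hKk k hk])]
    push_cast
    ring_nf
  have hpos : 0 < (K - z) - 1 := by linarith
  calc ∑ k ∈ S, Phi m (k - z)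
      ≤ (1 - phi m ((K - z) - 1)) / 2 := hreindex ▸ sum_Phi_add_natCast_le hm _ _
    _ ≤ ((2 * m) * ((K - z) - 1) ^ (2 * m))⁻¹ / 2 := by gcongr; exact one_sub_phi_le hm hpos
    _ ≤ ((4 * m) * (r - 1) ^ (2 * m))⁻¹ := by
        rw [div_eq_mul_inv, ← mul_inv, mul_right_comm, show (2 : ℝ) * m * 2 = 4 * m by ring]
        have : (0 : ℝ) < m := by exact_mod_cast hm
        gcongr
        linarith

theorem sum_Phi_sub_of_lt_abs_le (hm : 1 ≤ m) (S : Finset ℤ) {x r : ℝ} (hr : 1 < r) :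
    ∑ k ∈ S.filter (fun k : ℤ => r < |x - k|), Phi m (x - k) ≤ ((2 * m) * (r - 1) ^ (2 * m))⁻¹ := by
  set S' := S.filter fun k : ℤ => r < |x - k|
  rw [← Finset.sum_filter_add_sum_filter_not S' fun k : ℤ => x < k]
  have hright : ∑ k ∈ S'.filter (fun k : ℤ => x < k), Phi m (x - k) ≤
      ((4 * m) * (r - 1) ^ (2 * m))⁻¹ := by
    simp_rw [← Phi_neg (x - _), neg_sub]
    refine sum_Phi_intCast_sub_le hm hr fun k hk => ?_
    simp only [S', Finset.mem_filter] at hk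
    rw [abs_sub_comm, abs_of_pos (sub_pos.2 hk.2)] at hk
    linarith [hk.1.2]
  have hleft : ∑ k ∈ S'.filter (fun k : ℤ => ¬ x < k), Phi m (x - k) ≤
      ((4 * m) * (r - 1) ^ (2 * m))⁻¹ := by
    have hneg : ∀ k : ℤ, Phi m (x - k) = Phi m (((-k : ℤ) : ℝ) - -x) := fun k => by
      push_cast; ring_nf
    simp_rw [hneg]
    rw [← Finset.sum_image (f := fun j : ℤ => Phi m (j - -x)) fun k _ l _ h => neg_injective h]
    refine sum_Phi_intCast_sub_le hm hr fun j hj => ?_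
    obtain ⟨k, hk, rfl⟩ := Finset.mem_image.1 hj
    simp only [S', Finset.mem_filter, not_lt] at hk
    rw [abs_of_nonneg (sub_nonneg.2 hk.2)] at hk
    push_cast
    linarith [hk.1.2]
  calc _ ≤ _ := add_le_add hright hleft
    _ = ((2 * m) * (r - 1) ^ (2 * m))⁻¹ := by ring

end Activation

section Moduli

variable {X : Type*} [NormedAddCommGroup X]

theorem omega1_nonneg (g : ℝ → X) (s : Set ℝ) (δ : ℝ) : 0 ≤ omega1 g s δ :=
  Real.sSup_nonneg fun _ ⟨_, _, _, _, _, hr⟩ => hr ▸ norm_nonneg _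

theorem supNorm_nonneg (g : ℝ → X) (s : Set ℝ) : 0 ≤ supNorm g s :=
  Real.iSup_nonneg fun _ => norm_nonneg _

theorem bddAbove_range_norm {g : ℝ → X} {s : Set ℝ} (hs : IsCompact s) (hg : ContinuousOn g s) :
    BddAbove (range fun t : s => ‖g t‖) := by
  have := hs.bddAbove_image hg.norm
  rwa [image_eq_range] at this

theorem norm_le_supNorm {g : ℝ → X} {s : Set ℝ} (hs : IsCompact s) (hg : ContinuousOn g s) {t : ℝ}
    (ht : t ∈ s) : ‖g t‖ ≤ supNorm g s :=
  le_ciSup (f := fun t : s => ‖g t‖) (bddAbove_range_norm hs hg) ⟨t, ht⟩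

theorem norm_sub_le_omega1 {g : ℝ → X} {s : Set ℝ} (hs : IsCompact s) (hg : ContinuousOn g s)
    {x y δ : ℝ} (hx : x ∈ s) (hy : y ∈ s) (hxy : |x - y| ≤ δ) : ‖g x - g y‖ ≤ omega1 g s δ := by
  refine le_csSup ⟨2 * supNorm g s, ?_⟩ ⟨x, hx, y, hy, hxy, rfl⟩
  rintro _ ⟨u, hu, v, hv, -, rfl⟩
  linarith [norm_sub_le (g u) (g v), norm_le_supNorm hs hg hu, norm_le_supNorm hs hg hv]

end Moduli

section Taylor

variable {E : Type*} [NormedAddCommGroup E] [NormedSpace ℝ E]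

theorem norm_sub_le_of_norm_derivWithin_le_pow {f : ℝ → E} {s : Set ℝ} (hs : Convex ℝ s)
    (hf : DifferentiableOn ℝ f s) {x₀ r K : ℝ} {i : ℕ} (hx₀ : x₀ ∈ s)
    (hbound : ∀ t ∈ s, |t - x₀| ≤ r → ‖derivWithin f s t‖ ≤ K * |t - x₀| ^ i / i.factorial)
    {x : ℝ} (hx : x ∈ s) (hxr : |x - x₀| ≤ r) :
    ‖f x - f x₀‖ ≤ K * |x - x₀| ^ (i + 1) / (i + 1).factorial := by
  set d := x - x₀
  have hγ : MapsTo (fun τ : ℝ => x₀ + τ * d) (Icc 0 1) s := fun τ hτ =>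
    hs.add_smul_sub_mem hx₀ hx hτ
  have hγr : ∀ τ ∈ Icc (0 : ℝ) 1, |x₀ + τ * d - x₀| = τ * |d| := fun τ hτ => by
    rw [add_sub_cancel_left, abs_mul, abs_of_nonneg hτ.1]
  have hderiv : ∀ τ ∈ Icc (0 : ℝ) 1, HasDerivWithinAt (fun τ => f (x₀ + τ * d) - f x₀)
      (d • derivWithin f s (x₀ + τ * d)) (Icc 0 1) τ := fun τ hτ =>
    (((hf _ (hγ hτ)).hasDerivWithinAt.scomp τ
      ((hasDerivAt_mul_const d).const_add x₀).hasDerivWithinAt hγ)).sub_const _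
  have hB : ∀ τ, HasDerivAt (fun τ => K * |d| ^ (i + 1) * τ ^ (i + 1) / (i + 1).factorial)
      (K * |d| ^ (i + 1) * τ ^ i / i.factorial) τ := fun τ => by
    refine (((hasDerivAt_pow (i + 1) τ).const_mul (K * |d| ^ (i + 1))).div_const
      ((i + 1).factorial : ℝ)).congr_deriv ?_
    rw [Nat.factorial_succ]
    push_cast
    field_simp
  have key := image_norm_le_of_norm_deriv_right_le_deriv_boundary
    (fun τ hτ => (hderiv τ hτ).continuousWithinAt)
    (fun τ hτ => (hderiv τ (Ico_subset_Icc_self hτ)).mono_of_mem_nhdsWithin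
      (Icc_mem_nhdsGE_of_mem hτ))
    (by simp) hB (fun τ hτ => by
      have hτ' := Ico_subset_Icc_self hτ
      have := hbound _ (hγ hτ') (by rw [hγr τ hτ']; nlinarith [hτ'.2, abs_nonneg d])
      rw [hγr τ hτ'] at this
      rw [norm_smul, Real.norm_eq_abs]
      calc |d| * ‖derivWithin f s (x₀ + τ * d)‖ ≤ |d| * (K * (τ * |d|) ^ i / i.factorial) := by
            gcongr
        _ = K * |d| ^ (i + 1) * τ ^ i / i.factorial := by ring)
    (right_mem_Icc.2 zero_le_one)
  simpa [d] using key

theorem norm_sub_le_of_iteratedDerivWithin_eq_zero {s : Set ℝ} (hs : Convex ℝ s)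
    (hs' : UniqueDiffOn ℝ s) {x₀ r c : ℝ} (hx₀ : x₀ ∈ s) (n : ℕ) {f : ℝ → E}
    (hf : ContDiffOn ℝ (n + 1) f s)
    (hder : ∀ k, 1 ≤ k → k ≤ n → iteratedDerivWithin k f s x₀ = 0)
    (hc : ∀ t ∈ s, |t - x₀| ≤ r → ‖iteratedDerivWithin (n + 1) f s t‖ ≤ c)
    {x : ℝ} (hx : x ∈ s) (hxr : |x - x₀| ≤ r) :
    ‖f x - f x₀‖ ≤ c * |x - x₀| ^ (n + 1) / (n + 1).factorial := by
  induction n generalizing f x with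
  | zero =>
    refine norm_sub_le_of_norm_derivWithin_le_pow hs (hf.differentiableOn (by simp)) hx₀
      (fun t ht htr => ?_) hx hxr
    simpa using hc t ht htr
  | succ n ih =>
    refine norm_sub_le_of_norm_derivWithin_le_pow hs (hf.differentiableOn (by simp)) hx₀
      (fun t ht htr => ?_) hx hxr
    have hf'x₀ : derivWithin f s x₀ = 0 := by
      simpa using hder 1 le_rfl (by omega)
    simpa [hf'x₀] using ih (f := derivWithin f s) (hf.derivWithin hs' (by simp))
      (fun k hk hkn => by rw [← iteratedDerivWithin_succ']; exact hder _ (by omega) (by omega))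
      (fun t ht htr => by rw [← iteratedDerivWithin_succ']; exact hc t ht htr) ht htr

theorem norm_sub_le_of_iteratedDerivWithin_Icc_eq_zero {a b x₀ r c : ℝ} {N : ℕ} (hN : 1 ≤ N)
    {f : ℝ → E} (hf : ContDiffOn ℝ N f (Icc a b)) (hx₀ : x₀ ∈ Icc a b)
    (hder : ∀ k, 1 ≤ k → k < N → iteratedDerivWithin k f (Icc a b) x₀ = 0)
    (hc : ∀ t ∈ Icc a b, |t - x₀| ≤ r → ‖iteratedDerivWithin N f (Icc a b) t‖ ≤ c)
    {x : ℝ} (hx : x ∈ Icc a b) (hxr : |x - x₀| ≤ r) :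
    ‖f x - f x₀‖ ≤ c * |x - x₀| ^ N / N.factorial := by
  rcases eq_or_ne x x₀ with rfl | hne
  · simp [zero_pow (by omega : N ≠ 0)]
  obtain ⟨n, rfl⟩ : ∃ n, N = n + 1 := ⟨N - 1, by omega⟩
  have hab : a < b := by
    by_contra! h
    exact hne ((subsingleton_Icc_of_ge h) hx hx₀)
  exact norm_sub_le_of_iteratedDerivWithin_eq_zero (convex_Icc a b) (uniqueDiffOn_Icc hab) hx₀ n
    (by exact_mod_cast hf) (fun k hk hkn => hder k hk (by omega)) hc hx hxr

theorem ContDiffOn.continuousOn_iteratedDerivWithin_Icc {f : ℝ → E} {a b : ℝ} {N : ℕ}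
    (hf : ContDiffOn ℝ N f (Icc a b)) :
    ContinuousOn (iteratedDerivWithin N f (Icc a b)) (Icc a b) := by
  rcases lt_or_ge a b with hab | hba
  · exact hf.continuousOn_iteratedDerivWithin le_rfl (uniqueDiffOn_Icc hab)
  · exact (subsingleton_Icc_of_ge hba).continuousOn _

theorem norm_sub_le_omega1_mul_pow {f : ℝ → E} {a b x₀ x : ℝ} {N : ℕ} (hN : 1 ≤ N)
    (hf : ContDiffOn ℝ N f (Icc a b))
    (hx₀ : x₀ ∈ Icc a b)
    (hder : ∀ j : ℕ, 1 ≤ j → j ≤ N → iteratedDerivWithin j f (Icc a b) x₀ = 0) {δ : ℝ}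
    (hx : x ∈ Icc a b) (hxδ : |x - x₀| ≤ δ) :
    ‖f x - f x₀‖ ≤
      omega1 (iteratedDerivWithin N f (Icc a b)) (Icc a b) δ * δ ^ N / N.factorial := by
  have hc : ∀ t ∈ Icc a b, |t - x₀| ≤ δ → ‖iteratedDerivWithin N f (Icc a b) t‖ ≤
      omega1 (iteratedDerivWithin N f (Icc a b)) (Icc a b) δ := fun t ht htδ => by
    rw [← sub_zero (iteratedDerivWithin N f (Icc a b) t), ← hder N hN le_rfl]
    exact norm_sub_le_omega1 isCompact_Icc hf.continuousOn_iteratedDerivWithin_Icc ht hx₀ htδ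
  refine (norm_sub_le_of_iteratedDerivWithin_Icc_eq_zero hN hf hx₀
    (fun j h₁ h₂ => hder j h₁ h₂.le) hc hx hxδ).trans ?_
  gcongr
  exact omega1_nonneg _ _ _

theorem norm_sub_le_supNorm_mul_pow {f : ℝ → E} {a b x₀ x : ℝ} {N : ℕ} (hN : 1 ≤ N)
    (hf : ContDiffOn ℝ N f (Icc a b))
    (hx₀ : x₀ ∈ Icc a b)
    (hder : ∀ j : ℕ, 1 ≤ j → j < N → iteratedDerivWithin j f (Icc a b) x₀ = 0)
    (hx : x ∈ Icc a b) :
    ‖f x - f x₀‖ ≤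
      supNorm (iteratedDerivWithin N f (Icc a b)) (Icc a b) * (b - a) ^ N / N.factorial := by
  refine (norm_sub_le_of_iteratedDerivWithin_Icc_eq_zero hN hf hx₀ hder
    (fun t ht _ => norm_le_supNorm isCompact_Icc hf.continuousOn_iteratedDerivWithin_Icc ht) hx
    le_rfl).trans ?_
  gcongr
  · exact supNorm_nonneg _ _
  · rw [abs_sub_le_iff]
    constructor <;> linarith [hx.1, hx.2, hx₀.1, hx₀.2]

end Taylor

theorem Finset.sum_mul_le_of_le_of_le {ι : Type*} (s : Finset ι) (p : ι → Prop) [DecidablePred p]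
    {w e : ι → ℝ} {c₀ c₁ : ℝ} (hc₀ : 0 ≤ c₀) (hw : ∀ i ∈ s, 0 ≤ w i)
    (h₀ : ∀ i ∈ s, p i → e i ≤ c₀) (h₁ : ∀ i ∈ s, e i ≤ c₁) :
    ∑ i ∈ s, w i * e i ≤ c₀ * ∑ i ∈ s, w i + c₁ * ∑ i ∈ s.filter (fun i => ¬ p i), w i := by
  rw [← Finset.sum_filter_add_sum_filter_not s p]
  gcongr
  · calc ∑ i ∈ s.filter p, w i * e i ≤ ∑ i ∈ s.filter p, w i * c₀ := by
          refine Finset.sum_le_sum fun i hi => ?_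
          rw [Finset.mem_filter] at hi
          exact mul_le_mul_of_nonneg_left (h₀ i hi.1 hi.2) (hw i hi.1)
      _ ≤ c₀ * ∑ i ∈ s, w i := by
          rw [← Finset.sum_mul, mul_comm]
          exact mul_le_mul_of_nonneg_left (Finset.sum_le_sum_of_subset_of_nonneg
            (Finset.filter_subset _ _) fun i hi _ => hw i hi) hc₀
  · rw [Finset.mul_sum]
    refine Finset.sum_le_sum fun i hi => ?_
    rw [Finset.mem_filter] at hi
    exact (mul_le_mul_of_nonneg_left (h₁ i hi.1) (hw i hi.1)).trans_eq (mul_comm _ _)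



section Operator

variable {X : Type*} [NormedAddCommGroup X] [NormedSpace ℝ X] {m n : ℕ} {a b : ℝ}

theorem exists_mem_Icc_abs_sub_le_one {p q u : ℝ} (hpu : p ≤ u) (huq : u ≤ q) (hpq : ⌈p⌉ ≤ ⌊q⌋) :
    ∃ k ∈ Finset.Icc ⌈p⌉ ⌊q⌋, |u - k| ≤ 1 := by
  refine ⟨max ⌈p⌉ ⌊u⌋, Finset.mem_Icc.2 ⟨le_max_left _ _, max_le hpq (Int.floor_mono huq)⟩, ?_⟩
  have h₁ : (⌊u⌋ : ℝ) ≤ max ⌈p⌉ ⌊u⌋ := by exact_mod_cast le_max_right _ _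
  have h₂ : (max ⌈p⌉ ⌊u⌋ : ℤ) ≤ (⌈u⌉ : ℝ) := by
    exact_mod_cast max_le (Int.ceil_mono hpu) (Int.floor_le_ceil u)
  rw [abs_le]
  constructor <;> linarith [Int.lt_floor_add_one u, Int.ceil_lt_add_one u]

theorem div_mem_Icc_of_mem_Icc_ceil_floor (hn : 0 < n) {k : ℤ}
    (hk : k ∈ Finset.Icc ⌈(n : ℝ) * a⌉ ⌊(n : ℝ) * b⌋) : (k : ℝ) / n ∈ Icc a b := by
  rw [Finset.mem_Icc, Int.ceil_le, Int.le_floor] at hk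
  have hn' : (0 : ℝ) < n := by exact_mod_cast hn
  constructor
  · rw [le_div_iff₀ hn']; linarith
  · rw [div_le_iff₀ hn']; linarith

theorem inv_two_mul_le_sum_Phi (hm : 1 ≤ m) (hnab : ⌈(n : ℝ) * a⌉ ≤ ⌊(n : ℝ) * b⌋) {x : ℝ}
    (hx : x ∈ Icc a b) :
    (2 * (1 + 4 ^ m) ^ ((1 : ℝ) / (2 * m)))⁻¹ ≤
      ∑ k ∈ Finset.Icc ⌈(n : ℝ) * a⌉ ⌊(n : ℝ) * b⌋, Phi m (n * x - k) := by
  obtain ⟨k, hk, hxk⟩ := exists_mem_Icc_abs_sub_le_one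
    (mul_le_mul_of_nonneg_left hx.1 n.cast_nonneg) (mul_le_mul_of_nonneg_left hx.2 n.cast_nonneg)
    hnab
  exact (inv_two_mul_le_Phi hxk).trans
    (Finset.single_le_sum (f := fun k : ℤ => Phi m (n * x - k)) (fun k _ => Phi_nonneg hm _) hk)

theorem norm_An_sub_le_inv_mul_sum (f : ℝ → X) (hm : 1 ≤ m) {x : ℝ}
    (hV : 0 < ∑ k ∈ Finset.Icc ⌈(n : ℝ) * a⌉ ⌊(n : ℝ) * b⌋, Phi m (n * x - k)) :
    ‖An m a b n f x - f x‖ ≤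
      (∑ k ∈ Finset.Icc ⌈(n : ℝ) * a⌉ ⌊(n : ℝ) * b⌋, Phi m (n * x - k))⁻¹ *
        ∑ k ∈ Finset.Icc ⌈(n : ℝ) * a⌉ ⌊(n : ℝ) * b⌋, Phi m (n * x - k) * ‖f (k / n) - f x‖ := by
  set F := Finset.Icc ⌈(n : ℝ) * a⌉ ⌊(n : ℝ) * b⌋
  have hdiff : An m a b n f x - f x =
      (∑ k ∈ F, Phi m (n * x - k))⁻¹ • ∑ k ∈ F, Phi m (n * x - k) • (f (k / n) - f x) := by
    simp only [smul_sub, Finset.sum_sub_distrib, ← Finset.sum_smul, smul_smul,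
      inv_mul_cancel₀ hV.ne', one_smul]
    rfl
  rw [hdiff, norm_smul, Real.norm_eq_abs, abs_of_pos (inv_pos.2 hV)]
  gcongr
  refine (norm_sum_le _ _).trans_eq (Finset.sum_congr rfl fun k _ => ?_)
  rw [norm_smul, Real.norm_eq_abs, abs_of_nonneg (Phi_nonneg hm _)]

theorem norm_An_sub_le (f : ℝ → X) (hm : 1 ≤ m) (hnab : ⌈(n : ℝ) * a⌉ ≤ ⌊(n : ℝ) * b⌋) {x δ c₀ c₁ : ℝ}
    (hx : x ∈ Icc a b) (hδ : 1 < n * δ) (hc₀ : 0 ≤ c₀) (hc₁ : 0 ≤ c₁)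
    (hnear : ∀ k ∈ Finset.Icc ⌈(n : ℝ) * a⌉ ⌊(n : ℝ) * b⌋, |(k : ℝ) / n - x| ≤ δ →
      ‖f (k / n) - f x‖ ≤ c₀)
    (hfar : ∀ k ∈ Finset.Icc ⌈(n : ℝ) * a⌉ ⌊(n : ℝ) * b⌋, ‖f (k / n) - f x‖ ≤ c₁) :
    ‖An m a b n f x - f x‖ ≤
      (1 + 4 ^ m) ^ ((1 : ℝ) / (2 * m)) * (2 * c₀ + c₁ / (m * (n * δ - 1) ^ (2 * m))) := by
  set F := Finset.Icc ⌈(n : ℝ) * a⌉ ⌊(n : ℝ) * b⌋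
  set C := ((1 : ℝ) + 4 ^ m) ^ ((1 : ℝ) / (2 * m))
  set V := ∑ k ∈ F, Phi m (n * x - k)
  set T := ((2 * m) * (n * δ - 1) ^ (2 * m) : ℝ)⁻¹
  have hn : (0 : ℝ) < n := Nat.cast_pos.2 <| Nat.pos_of_ne_zero fun h => by
    simp only [h, Nat.cast_zero, zero_mul] at hδ
    linarith
  have hC : 1 ≤ C := Real.one_le_rpow (by linarith [pow_pos (by norm_num : (0 : ℝ) < 4) m])
    (by positivity)
  have hVlb : (2 * C)⁻¹ ≤ V := inv_two_mul_le_sum_Phi hm hnab hx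
  have hVpos : 0 < V := (inv_pos.2 (by linarith)).trans_le hVlb
  have hT : 0 ≤ T := by
    have : 0 < n * δ - 1 := by linarith
    positivity
  have hfarPhi : ∑ k ∈ F.filter (fun k : ℤ => ¬ |(k : ℝ) / n - x| ≤ δ), Phi m (n * x - k) ≤ T := by
    rw [Finset.filter_congr fun k _ => by
      rw [not_le, show (k : ℝ) / n - x = -((n * x - k) / n) by field_simp; ring, abs_neg, abs_div,
        abs_of_pos hn, lt_div_iff₀ hn, mul_comm]]
    exact sum_Phi_sub_of_lt_abs_le hm F hδ
  calc ‖An m a b n f x - f x‖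
      ≤ V⁻¹ * ∑ k ∈ F, Phi m (n * x - k) * ‖f (k / n) - f x‖ :=
        norm_An_sub_le_inv_mul_sum f hm hVpos
    _ ≤ V⁻¹ * (c₀ * V + c₁ * T) := by
        gcongr
        exact (F.sum_mul_le_of_le_of_le _ hc₀ (fun k _ => Phi_nonneg hm _) hnear hfar).trans
          (by gcongr)
    _ = c₀ + V⁻¹ * (c₁ * T) := by field_simp
    _ ≤ 2 * C * c₀ + 2 * C * (c₁ * T) := by
        gcongr
        · nlinarith
        · exact inv_le_of_inv_le₀ (by linarith) hVlb
    _ = C * (2 * c₀ + c₁ / (m * (n * δ - 1) ^ (2 * m))) := by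
        simp only [T]
        field_simp

end Operator

theorem An_approx_smooth_vanishing_derivs_general {X : Type*} [NormedAddCommGroup X]
    [NormedSpace ℝ X] (a b : ℝ) (N : ℕ) (hN : 1 ≤ N)
    (f : ℝ → X) (hf : ContDiffOn ℝ N f (Set.Icc a b)) (m : ℕ) (hm : 1 ≤ m)
    (α : ℝ) (n : ℕ) (hn : 2 < (n : ℝ) ^ (1 - α))
    (hnab : ⌈(n : ℝ) * a⌉ ≤ ⌊(n : ℝ) * b⌋) (x₀ : ℝ) (hx₀ : x₀ ∈ Set.Icc a b)
    (hder : ∀ j : ℕ, 1 ≤ j → j ≤ N → iteratedDerivWithin j f (Set.Icc a b) x₀ = 0) :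
    ‖An m a b n f x₀ - f x₀‖ ≤
      ((1 : ℝ) + 4 ^ m) ^ ((1 : ℝ) / (2 * m)) *
        (omega1 (iteratedDerivWithin N f (Set.Icc a b)) (Set.Icc a b)
            (1 / (n : ℝ) ^ α) * 2 / ((n : ℝ) ^ (α * N) * (N.factorial : ℝ)) +
          supNorm (iteratedDerivWithin N f (Set.Icc a b)) (Set.Icc a b) * (b - a) ^ N /
            ((N.factorial : ℝ) * m * ((n : ℝ) ^ (1 - α) - 2) ^ (2 * m))) := by
  have hn0 : 0 < n := Nat.pos_of_ne_zero fun h => by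
    simp only [h, Nat.cast_zero] at hn
    linarith [Real.zero_rpow_le_one (1 - α)]
  set δ : ℝ := 1 / (n : ℝ) ^ α
  have hL : (n : ℝ) ^ (1 - α) = n * δ := by
    rw [Real.rpow_sub (Nat.cast_pos.2 hn0), Real.rpow_one]; ring
  rw [hL] at hn ⊢
  have hω := omega1_nonneg (iteratedDerivWithin N f (Icc a b)) (Icc a b) δ
  have hM := supNorm_nonneg (iteratedDerivWithin N f (Icc a b)) (Icc a b)
  have hba : 0 ≤ b - a := by linarith [hx₀.1, hx₀.2]
  refine (norm_An_sub_le f hm hnab hx₀ (δ := δ) (by linarith) (by positivity) (by positivity)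
    (fun k hk hkδ => norm_sub_le_omega1_mul_pow hN hf hx₀ hder
      (div_mem_Icc_of_mem_Icc_ceil_floor hn0 hk) hkδ)
    (fun k hk => norm_sub_le_supNorm_mul_pow hN hf hx₀ (fun j h₁ h₂ => hder j h₁ h₂.le)
      (div_mem_Icc_of_mem_Icc_ceil_floor hn0 hk))).trans ?_
  have hnδ : δ ^ N = ((n : ℝ) ^ (α * N))⁻¹ := by
    rw [Real.rpow_mul_natCast n.cast_nonneg, ← inv_pow, ← one_div]
  have hm' : (0 : ℝ) < m := by exact_mod_cast hm
  rw [hnδ]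
  gcongr _ * (?_ + ?_)
  · exact le_of_eq (by field_simp)
  · rw [div_div, mul_assoc]
    gcongr
    linarith

theorem An_approx_smooth_vanishing_derivs {X : Type*} [NormedAddCommGroup X]
    [NormedSpace ℝ X] [CompleteSpace X] (a b : ℝ) (hab : a ≤ b) (N : ℕ) (hN : 1 ≤ N)
    (f : ℝ → X) (hf : ContDiffOn ℝ N f (Set.Icc a b)) (m : ℕ) (hm : 1 ≤ m)
    (α : ℝ) (hα0 : 0 < α) (hα1 : α < 1) (n : ℕ) (hn : 2 < (n : ℝ) ^ (1 - α))
    (hnab : ⌈(n : ℝ) * a⌉ ≤ ⌊(n : ℝ) * b⌋) (x₀ : ℝ) (hx₀ : x₀ ∈ Set.Icc a b)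
    (hder : ∀ j : ℕ, 1 ≤ j → j ≤ N → iteratedDerivWithin j f (Set.Icc a b) x₀ = 0) :
    ‖An m a b n f x₀ - f x₀‖ ≤
      ((1 : ℝ) + 4 ^ m) ^ ((1 : ℝ) / (2 * m)) *
        (omega1 (iteratedDerivWithin N f (Set.Icc a b)) (Set.Icc a b)
            (1 / (n : ℝ) ^ α) * 2 / ((n : ℝ) ^ (α * N) * (N.factorial : ℝ)) +
          supNorm (iteratedDerivWithin N f (Set.Icc a b)) (Set.Icc a b) * (b - a) ^ N /
            ((N.factorial : ℝ) * m * ((n : ℝ) ^ (1 - α) - 2) ^ (2 * m))) :=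
  An_approx_smooth_vanishing_derivs_general a b N hN f hf m hm α n hn hnab x₀ hx₀ hder
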